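/- Let d, e, r, k, t be positive integers with d dividing q−1 and gcd(d, e) = 1. Suppose q = q_0^m where q_0 is a prime power with q_0 ≡ 1 (mod d) and d divides m. Then f(x) := x^r · h_k(x^{e(q−1)/d})^t is a permutation polynomial of F_q if and only if gcd(k, pd) = 1 and gcd(r, (q−1)/d) = 1, where p is the characteristic of F_q. -/

import Mathlib

/-! Put `s = (q - 1) / d`, so `f x = x ^ r * H (x ^ s)` with `H w = h_k(w ^ e) ^ t`, and
`x ^ s ∈ μ_d` for `x ≠ 0`. For `w ∈ μ_d`, `h_k(w)` is fixed by `y ↦ y ^ q0` because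
`d ∣ q0 - 1`; as `q0 ≡ 1 [MOD d]` and `d ∣ m` give `d * (q0 - 1) ∣ q - 1`, i.e. `q0 - 1 ∣ s`,
this yields `H w ^ s = 1` whenever `h_k(w) ≠ 0`, which holds on `μ_d` when `gcd(k, p d) = 1`.
Hence `f x ^ s = (x ^ s) ^ r`, so `f a = f b` forces `a ^ s = b ^ s` (as `gcd(r, d) = 1`), then
`a ^ r = b ^ r`, and `a = b` (as `gcd(r, s) = 1`).

Conversely each failing condition gives a collision: `f 1 = f 0` if `p ∣ k`; `f w = f 1` for
some `w ≠ 1` with `w ^ gcd(r, s) = 1`; and, since `x ↦ x ^ (e s)` maps `F_q^*` onto `μ_d`,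
`f c = f 0` for `c ^ (e s) = w ≠ 1` with `w ^ gcd(k, d) = 1`, a root of `h_k`. -/

open Polynomial Finset

theorem eq_of_pow_eq_of_pow_eq {G₀ : Type*} [CommGroupWithZero G₀] {a b : G₀} {m n : ℕ}
    (hmn : m.Coprime n) (hb : b ≠ 0) (hm : a ^ m = b ^ m) (hn : a ^ n = b ^ n) : a = b := by
  have h : (a / b) ^ m.gcd n = 1 := pow_gcd_eq_one.mpr
    ⟨by rw [div_pow, hm, div_self (pow_ne_zero _ hb)],
      by rw [div_pow, hn, div_self (pow_ne_zero _ hb)]⟩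
  rwa [hmn, pow_one, div_eq_one_iff_eq hb] at h

theorem exists_ne_one_pow_eq_one {G : Type*} [Group G] [Finite G] {n : ℕ} (hn : n ∣ Nat.card G)
    (hn1 : n ≠ 1) : ∃ g : G, g ≠ 1 ∧ g ^ n = 1 := by
  obtain ⟨ℓ, hℓ, hℓn⟩ := Nat.exists_prime_and_dvd hn1
  have := Fact.mk hℓ
  obtain ⟨g, hg⟩ := exists_prime_orderOf_dvd_card' ℓ (hℓn.trans hn)
  refine ⟨g, fun h => hℓ.one_lt.ne' ?_, orderOf_dvd_iff_pow_eq_one.mp (hg ▸ hℓn)⟩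
  rw [← hg, h, orderOf_one]

theorem IsCyclic.exists_pow_eq_of_pow_eq_one {G : Type*} [Group G] [Finite G] [IsCyclic G]
    {d s : ℕ} (hds : d * s = Nat.card G) {w : G} (hw : w ^ d = 1) : ∃ c : G, c ^ s = w := by
  obtain ⟨ζ, hζ⟩ := IsCyclic.exists_monoid_generator (α := G)
  obtain ⟨j, rfl⟩ := hζ w
  have hd : d ≠ 0 := by rintro rfl; exact Nat.card_pos.ne' (by simpa using hds.symm)
  obtain ⟨i, rfl⟩ : s ∣ j := by
    rw [← pow_mul, ← orderOf_dvd_iff_pow_eq_one, orderOf_eq_card_of_forall_mem_powers hζ,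
      ← hds, mul_comm j] at hw
    exact (Nat.mul_dvd_mul_iff_left (Nat.pos_of_ne_zero hd)).mp hw
  exact ⟨ζ ^ i, by rw [← pow_mul, mul_comm]⟩

theorem IsCyclic.exists_pow_mul_eq_of_pow_eq_one {G : Type*} [Group G] [Finite G] [IsCyclic G]
    {d s e : ℕ} (hds : d * s = Nat.card G) (he : e.Coprime d) {w : G} (hw : w ^ d = 1) :
    ∃ c : G, c ^ (e * s) = w := by
  obtain ⟨n, hn⟩ :=
    exists_pow_eq_self_of_coprime (he.coprime_dvd_right (orderOf_dvd_of_pow_eq_one hw))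
  obtain ⟨c, hc⟩ := exists_pow_eq_of_pow_eq_one hds (w := w ^ n)
    (by rw [← pow_mul, mul_comm, pow_mul, hw, one_pow])
  exact ⟨c, by rw [mul_comm, pow_mul, hc, ← pow_mul, mul_comm, pow_mul, hn]⟩

theorem Nat.mul_sub_one_dvd_pow_sub_one {a d m : ℕ} (ha : a ≡ 1 [MOD d]) (hdm : d ∣ m) :
    d * (a - 1) ∣ a ^ m - 1 := by
  rcases Nat.eq_zero_or_pos a with rfl | ha0
  · cases m <;> simp
  have hsum : d ∣ ∑ i ∈ range m, a ^ i := by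
    have ha' : (a : ZMod d) = 1 := by simpa using (ZMod.natCast_eq_natCast_iff a 1 d).mpr ha
    rw [← ZMod.natCast_eq_zero_iff]
    push_cast
    simp [ha', (ZMod.natCast_eq_zero_iff m d).mpr hdm]
  rw [← geom_sum_mul_of_one_le ha0]
  exact Nat.mul_dvd_mul_right hsum _

theorem geom_sum_eq_zero_of_pow_eq_one {K : Type*} [Field K] {w : K} {k : ℕ} (hw : w ≠ 1)
    (hwk : w ^ k = 1) : ∑ i ∈ range k, w ^ i = 0 := by
  rw [geom_sum_eq hw, hwk, sub_self, zero_div]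

theorem geom_sum_ne_zero_of_pow_eq_one {K : Type*} [Field K] {p : ℕ} [CharP K p] {w : K}
    {k d : ℕ} (hw : w ^ d = 1) (hpk : ¬ p ∣ k) (hkd : k.Coprime d) :
    ∑ i ∈ range k, w ^ i ≠ 0 := by
  by_cases hw1 : w = 1
  · simpa [hw1, CharP.cast_eq_zero_iff K p] using hpk
  intro h
  have hwk : w ^ k = 1 := by rw [← sub_eq_zero, ← geom_sum_mul, h, zero_mul]
  exact hw1 (by simpa [hkd] using pow_gcd_eq_one.mpr ⟨hwk, hw⟩)

theorem geom_sum_pow_char_pow_eq_self {R : Type*} [CommSemiring R] {p : ℕ} [ExpChar R p] {n : ℕ}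
    {w : R} (hw : w ^ p ^ n = w) (k : ℕ) :
    (∑ i ∈ range k, w ^ i) ^ p ^ n = ∑ i ∈ range k, w ^ i := by
  simp_rw [sum_pow_char_pow, pow_right_comm _ _ (p ^ n), hw]

theorem pow_sub_one_eq_one_of_pow_eq_self {M₀ : Type*} [MonoidWithZero M₀]
    [IsRightCancelMulZero M₀] {y : M₀} {n : ℕ} (hy : y ≠ 0) (hn : n ≠ 0) (hyn : y ^ n = y) :
    y ^ (n - 1) = 1 := by
  refine mul_right_cancel₀ hy ?_
  rw [← pow_succ, Nat.sub_add_cancel (Nat.pos_of_ne_zero hn), hyn, one_mul]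

theorem geom_sum_pow_eq_one {K : Type*} [Field K] {p : ℕ} [ExpChar K p] {j d s k : ℕ}
    (hd : d ∣ p ^ j - 1) (hs : p ^ j - 1 ∣ s) {w : K} (hw : w ^ d = 1)
    (hne : ∑ i ∈ range k, w ^ i ≠ 0) : (∑ i ∈ range k, w ^ i) ^ s = 1 := by
  have hpj : p ^ j ≠ 0 := pow_ne_zero j (expChar_ne_zero K p)
  have hwq : w ^ p ^ j = w := by
    obtain ⟨a, ha⟩ := hd
    rw [← Nat.sub_add_cancel (Nat.one_le_iff_ne_zero.mpr hpj), pow_succ, ha, pow_mul, hw, one_pow,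
      one_mul]
  obtain ⟨b, rfl⟩ := hs
  rw [pow_mul, pow_sub_one_eq_one_of_pow_eq_self hne hpj (geom_sum_pow_char_pow_eq_self hwq k),
    one_pow]

theorem not_dvd_length_of_injective {F : Type*} [Field F] {p r k t n : ℕ} [CharP F p]
    (hr : r ≠ 0) (ht : t ≠ 0)
    (hf : Function.Injective fun c : F => c ^ r * (∑ i ∈ range k, (c ^ n) ^ i) ^ t) :
    ¬ p ∣ k := fun hpk =>
  one_ne_zero <| @hf 1 0 <| by simp [(CharP.cast_eq_zero_iff F p k).mpr hpk, hr, ht]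

namespace FiniteField

variable {F : Type*} [Field F] [Fintype F]

theorem exists_eq_char_pow_of_card_eq_pow {p q0 m : ℕ} [CharP F p] (hp : p.Prime)
    (hq : Fintype.card F = q0 ^ m) : ∃ j, q0 = p ^ j := by
  have hm : m ≠ 0 := by
    rintro rfl
    exact (Fintype.one_lt_card (α := F)).ne' (by simpa using hq)
  obtain ⟨n, -, hcard⟩ := card F p
  obtain ⟨j, -, hj⟩ := (Nat.dvd_prime_pow hp).mp (hcard ▸ hq ▸ dvd_pow_self q0 hm)
  exact ⟨j, hj⟩

theorem pow_pow_eq_one {d s : ℕ} (hds : d * s = Fintype.card F - 1) {c : F} (hc : c ≠ 0) :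
    (c ^ s) ^ d = 1 := by
  rw [← pow_mul, mul_comm, hds, pow_card_sub_one_eq_one c hc]

theorem injective_pow_mul_comp_pow {d s r : ℕ} (hds : d * s = Fintype.card F - 1) (hr : r ≠ 0)
    (hrs : r.Coprime s) (hrd : r.Coprime d) {h : F → F}
    (hh : ∀ w : F, w ^ d = 1 → h w ≠ 0 ∧ h w ^ s = 1) :
    Function.Injective fun c : F => c ^ r * h (c ^ s) := by
  have hzero : ∀ c : F, c ^ r * h (c ^ s) = 0 ↔ c = 0 := fun c => by
    refine ⟨fun hc => by_contra fun hc0 => ?_, fun hc => by rw [hc, zero_pow hr, zero_mul]⟩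
    exact mul_ne_zero (pow_ne_zero r hc0) (hh _ (pow_pow_eq_one hds hc0)).1 hc
  have hpow : ∀ c : F, c ≠ 0 → (c ^ r * h (c ^ s)) ^ s = (c ^ s) ^ r := fun c hc => by
    rw [mul_pow, (hh _ (pow_pow_eq_one hds hc)).2, mul_one, pow_right_comm]
  intro a b hab
  simp only at hab
  by_cases hb : b = 0
  · rwa [hb, (hzero 0).mpr rfl, hzero, ← hb] at hab
  have ha : a ≠ 0 := fun ha => hb ((hzero b).mp (hab ▸ (hzero a).mpr ha))
  have has : a ^ s = b ^ s := eq_of_pow_eq_of_pow_eq hrd (pow_ne_zero s hb)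
    (by rw [← hpow a ha, ← hpow b hb, hab])
    (by rw [pow_pow_eq_one hds ha, pow_pow_eq_one hds hb])
  rw [has] at hab
  have har : a ^ r = b ^ r := mul_right_cancel₀ (hh _ (pow_pow_eq_one hds hb)).1 hab
  exact eq_of_pow_eq_of_pow_eq hrs hb har has

variable {r k t : ℕ}

theorem coprime_exponent_of_injective {d s e : ℕ} (hds : d * s = Fintype.card F - 1)
    (hf : Function.Injective fun c : F => c ^ r * (∑ i ∈ range k, (c ^ (e * s)) ^ i) ^ t) :
    r.Coprime s := by
  by_contra hrs
  have hcard : r.gcd s ∣ Nat.card Fˣ := by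
    rw [Nat.card_units, Nat.card_eq_fintype_card, ← hds]
    exact (Nat.gcd_dvd_right r s).trans (dvd_mul_left s d)
  obtain ⟨w, hw1, hw⟩ := exists_ne_one_pow_eq_one hcard hrs
  obtain ⟨hwr, hws⟩ := pow_gcd_eq_one.mp hw
  refine hw1 (Units.val_eq_one.mp (@hf w 1 ?_))
  simp only [← Units.val_pow_eq_pow_val, mul_comm e, pow_mul, hwr, hws, one_pow,
    Units.val_one]

theorem coprime_length_of_injective {d s e : ℕ} (hds : d * s = Fintype.card F - 1)
    (he : e.Coprime d) (hr : r ≠ 0) (ht : t ≠ 0)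
    (hf : Function.Injective fun c : F => c ^ r * (∑ i ∈ range k, (c ^ (e * s)) ^ i) ^ t) :
    k.Coprime d := by
  by_contra hkd
  have hcard : Nat.card Fˣ = d * s := by rw [Nat.card_units, Nat.card_eq_fintype_card, hds]
  obtain ⟨w, hw1, hw⟩ := exists_ne_one_pow_eq_one
    (hcard ▸ (Nat.gcd_dvd_right k d).trans (dvd_mul_right d s)) hkd
  obtain ⟨hwk, hwd⟩ := pow_gcd_eq_one.mp hw
  obtain ⟨c, hc⟩ := IsCyclic.exists_pow_mul_eq_of_pow_eq_one hcard.symm he hwd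
  have hvanish : ∑ i ∈ range k, (w : F) ^ i = 0 := geom_sum_eq_zero_of_pow_eq_one
    (fun h => hw1 (Units.val_eq_one.mp h))
    (by rw [← Units.val_pow_eq_pow_val, hwk, Units.val_one])
  have hcw : (c : F) ^ (e * s) = w := by rw [← Units.val_pow_eq_pow_val, hc]
  refine c.ne_zero (@hf c 0 ?_)
  simp only [hcw, hvanish, zero_pow ht, zero_pow hr, mul_zero, zero_mul]

theorem coprime_of_injective {p d s e : ℕ} [CharP F p] (hp : p.Prime)
    (hds : d * s = Fintype.card F - 1) (he : e.Coprime d) (hr : r ≠ 0) (ht : t ≠ 0)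
    (hf : Function.Injective fun c : F => c ^ r * (∑ i ∈ range k, (c ^ (e * s)) ^ i) ^ t) :
    k.Coprime (p * d) ∧ r.Coprime s :=
  ⟨Nat.coprime_mul_iff_right.mpr
    ⟨(hp.coprime_iff_not_dvd.mpr (not_dvd_length_of_injective hr ht hf)).symm,
      coprime_length_of_injective hds he hr ht hf⟩,
    coprime_exponent_of_injective hds hf⟩

theorem injective_of_coprime {p j d s e : ℕ} [CharP F p] [Fact p.Prime]
    (hds : d * s = Fintype.card F - 1) (hd : d ∣ p ^ j - 1) (hs : p ^ j - 1 ∣ s) (hr : r ≠ 0)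
    (hkpd : k.Coprime (p * d)) (hrs : r.Coprime s) :
    Function.Injective fun c : F => c ^ r * (∑ i ∈ range k, (c ^ (e * s)) ^ i) ^ t := by
  obtain ⟨hkp, hkd⟩ := Nat.coprime_mul_iff_right.mp hkpd
  have hpk : ¬ p ∣ k := (Nat.Prime.coprime_iff_not_dvd Fact.out).mp hkp.symm
  have hinj := injective_pow_mul_comp_pow hds hr hrs (hrs.coprime_dvd_right (hd.trans hs))
    (h := fun v => (∑ i ∈ range k, (v ^ e) ^ i) ^ t) fun v hv => by
      have hve : (v ^ e) ^ d = 1 := by rw [pow_right_comm, hv, one_pow]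
      have hne := geom_sum_ne_zero_of_pow_eq_one hve hpk hkd
      refine ⟨pow_ne_zero t hne, ?_⟩
      rw [pow_right_comm, geom_sum_pow_eq_one hd hs hve hne, one_pow]
  simpa only [← pow_mul'] using hinj

end FiniteField

theorem stmt_3_general {F : Type*} [Field F] [Fintype F] {q q0 m d e r k t p : ℕ}
    (hq : Fintype.card F = q) (hp : p.Prime) [CharP F p]
    (hqm : q = q0 ^ m) (hcong : q0 ≡ 1 [MOD d]) (hdm : d ∣ m)
    (hd : 0 < d) (hr : 0 < r) (ht : 0 < t)
    (hdvd : d ∣ q - 1) (hed : Nat.gcd d e = 1) :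
    Function.Bijective (fun c : F =>
      (X ^ r * ((∑ i ∈ Finset.range k, X ^ i : F[X]).comp
        (X ^ (e * ((q - 1) / d)))) ^ t).eval c) ↔
      (Nat.gcd k (p * d) = 1 ∧ Nat.gcd r ((q - 1) / d) = 1) := by
  have := Fact.mk hp
  set s := (q - 1) / d
  have hds : d * s = Fintype.card F - 1 := hq ▸ Nat.mul_div_cancel' hdvd
  obtain ⟨j, rfl⟩ := FiniteField.exists_eq_char_pow_of_card_eq_pow hp (hq.trans hqm)
  simp only [eval_mul, eval_pow, eval_X, eval_comp, eval_finsetSum]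
  refine ⟨fun hf => FiniteField.coprime_of_injective hp hds (Nat.Coprime.symm hed) hr.ne' ht.ne'
    hf.injective,
    fun ⟨hkpd, hrs⟩ => Finite.injective_iff_bijective.mp ?_⟩
  have hdq0 : d ∣ p ^ j - 1 := (Nat.modEq_iff_dvd' (Nat.one_le_pow _ _ hp.pos)).mp hcong.symm
  have hs : p ^ j - 1 ∣ s := by
    refine (Nat.mul_dvd_mul_iff_left hd).mp ?_
    rw [hds, hq, hqm]
    exact Nat.mul_sub_one_dvd_pow_sub_one hcong hdm
  exact FiniteField.injective_of_coprime hds hdq0 hs hr.ne' hkpd hrs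

/-- Let d, e, r, k, t > 0 with d ∣ q−1 and gcd(d, e) = 1. Suppose q = q_0^m where q_0
is a prime power with q_0 ≡ 1 (mod d) and d ∣ m. Then
f(x) := x^r · h_k(x^{e(q−1)/d})^t permutes F_q iff gcd(k, pd) = 1 and
gcd(r, (q−1)/d) = 1, where p = char F_q and h_k(x) = x^{k−1} + ⋯ + 1. -/
theorem stmt_3 {F : Type*} [Field F] [Fintype F] {q q0 m d e r k t p : ℕ}
    (hq : Fintype.card F = q) (hp : p.Prime) [CharP F p]
    (hq0 : IsPrimePow q0) (hqm : q = q0 ^ m) (hcong : q0 ≡ 1 [MOD d]) (hdm : d ∣ m)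
    (hd : 0 < d) (he : 0 < e) (hr : 0 < r) (hk : 0 < k) (ht : 0 < t)
    (hdvd : d ∣ q - 1) (hed : Nat.gcd d e = 1) :
    Function.Bijective (fun c : F =>
      (X ^ r * ((∑ i ∈ Finset.range k, X ^ i : F[X]).comp
        (X ^ (e * ((q - 1) / d)))) ^ t).eval c) ↔
      (Nat.gcd k (p * d) = 1 ∧ Nat.gcd r ((q - 1) / d) = 1) :=
  stmt_3_general hq hp hqm hcong hdm hd hr ht hdvd hed
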